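/- Let $(\Omega, \mathcal{F}, P)$ be a probability space and let $X, Y$ be bounded real random variables, $X$ measurable with respect to a sub-$\sigma$-algebra $\mathcal{A}$ and $Y$ measurable with respect to a sub-$\sigma$-algebra $\mathcal{B}$. Suppose for all $A \in \mathcal{A}$ and $B \in \mathcal{B}$, $|P(A \cap B) - P(A)P(B)| \le \alpha$. Let $U_1, \dots, U_k$ be real random variables with values in $[0, \infty)$ such that for each $2 \le i \le k$: $U_i$ is $\mathcal{B}_i$-measurable, $\sum_{l=1}^{i-1} U_l$ is $\mathcal{A}_i$-measurable, and $|P(A\cap B)-P(A)P(B)| \le \alpha$ for all $A \in \mathcal{A}_i$, $B \in \mathcal{B}_i$, and moreover $U_2, \dots, U_k$ all have the same distribution as $U_1$. Then $\big| E(e^{-\sum_{i=1}^k U_i}) - \big(E(e^{-U_1})\big)^k \big| \le 4(k-1)\alpha$. -/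

import Mathlib

/-!
Put `m = E e^{-U₁}` and `a_j = E exp(-(U₁ + ⋯ + U_j))`. Since
`exp(-(U₁ + ⋯ + U_{j+1})) = exp(-(U₁ + ⋯ + U_j)) · e^{-U_{j+1}}` is a product of two `[0, 1]`-valued
variables measurable for `𝒜_{j+1}` and `ℬ_{j+1}`, and `E e^{-U_{j+1}} = m`, the covariance
inequality gives `|a_{j+1} - a_j m| ≤ α`; as `0 ≤ m ≤ 1`, induction yields `|a_k - m^k| ≤ (k - 1) α`.

For `[0, 1]`-valued `f, g` the covariance inequality even holds with constant `1`: the staircases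
`(1/n) ∑_{j ≤ n} 1{f ≥ j/n}` and `(1/n) ∑_{j ≤ n} 1{g ≥ j/n}` are within `1/n` of `f` and `g`, and
their covariance is an average of `n²` terms `P(A ∩ B) - P(A) P(B)`, each at most `α`.
-/

open MeasureTheory ProbabilityTheory Filter Topology

lemma abs_le_one_of_mem_Icc {x : ℝ} (hx : x ∈ Set.Icc 0 1) : |x| ≤ 1 :=
  abs_le.2 ⟨by linarith [hx.1], hx.2⟩

/-- Equal to `⌊n x⌋₊ / n` on `[0, 1]`; written with indicators so that the covariance of
`stair n ∘ f` and `stair n ∘ g` expands into covariances of indicators of level sets. -/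
noncomputable def stair (n : ℕ) (x : ℝ) : ℝ :=
  ∑ j ∈ Finset.Icc 1 n, (n : ℝ)⁻¹ * (Set.Ici ((j : ℝ) / n)).indicator 1 x

lemma stair_eq_floor {n : ℕ} (hn : 0 < n) {x : ℝ} (hx : x ∈ Set.Icc 0 1) :
    stair n x = ⌊n * x⌋₊ / n := by
  obtain ⟨hx0, hx1⟩ := hx
  have hn' : (0 : ℝ) < n := by exact_mod_cast hn
  have hmem : ∀ j : ℕ, (x ∈ Set.Ici ((j : ℝ) / n) ↔ j ≤ ⌊n * x⌋₊) := fun j => by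
    rw [Set.mem_Ici, div_le_iff₀ hn', mul_comm x, Nat.le_floor_iff (by positivity)]
  have hfloor : ⌊n * x⌋₊ ≤ n := Nat.floor_le_of_le (by nlinarith)
  simp only [stair, ← Finset.mul_sum, Set.indicator_apply, hmem, Pi.one_apply, Finset.sum_boole]
  have hfilter : {j ∈ Finset.Icc 1 n | j ≤ ⌊n * x⌋₊} = Finset.Icc 1 ⌊n * x⌋₊ := by
    ext j; simp only [Finset.mem_filter, Finset.mem_Icc]; omega
  rw [inv_mul_eq_div, hfilter, Nat.card_Icc, Nat.add_sub_cancel]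

lemma stair_mem_Icc {n : ℕ} (hn : 0 < n) {x : ℝ} (hx : x ∈ Set.Icc 0 1) :
    stair n x ∈ Set.Icc 0 1 := by
  have hn' : (0 : ℝ) < n := by exact_mod_cast hn
  rw [stair_eq_floor hn hx]
  obtain ⟨hx0, hx1⟩ := hx
  refine ⟨by positivity, div_le_one_of_le₀ ?_ hn'.le⟩
  exact (Nat.floor_le (by positivity)).trans (by nlinarith)

lemma abs_sub_stair_le {n : ℕ} (hn : 0 < n) {x : ℝ} (hx : x ∈ Set.Icc 0 1) :
    |x - stair n x| ≤ 1 / n := by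
  have hn' : (0 : ℝ) < n := by exact_mod_cast hn
  have h1 : (⌊n * x⌋₊ : ℝ) ≤ n * x := Nat.floor_le (mul_nonneg hn'.le hx.1)
  have h2 : n * x < ⌊n * x⌋₊ + 1 := Nat.lt_floor_add_one _
  have hsub : x - ⌊n * x⌋₊ / n = (n * x - ⌊n * x⌋₊) / n := by field_simp
  rw [stair_eq_floor hn hx, hsub, abs_div, abs_of_pos hn', abs_of_nonneg (by linarith)]
  gcongr
  linarith

lemma measurable_stair (n : ℕ) : Measurable (stair n) :=
  Finset.measurable_sum _ fun _ _ => (measurable_one.indicator measurableSet_Ici).const_mul _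

def MixingCoeffLE {Ω : Type*} [MeasurableSpace Ω] (P : Measure Ω) (𝒜 ℬ : MeasurableSpace Ω)
    (α : ℝ) : Prop :=
  ∀ A B : Set Ω, MeasurableSet[𝒜] A → MeasurableSet[ℬ] B →
    |(P (A ∩ B)).toReal - (P A).toReal * (P B).toReal| ≤ α

section Covariance

variable {Ω : Type*} [m0 : MeasurableSpace Ω] {P : Measure Ω} [IsProbabilityMeasure P]

lemma memLp_of_mem_Icc {h : Ω → ℝ} (hm : Measurable h) (h01 : ∀ ω, h ω ∈ Set.Icc 0 1)
    {p : ENNReal} : MemLp h p P :=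
  MemLp.of_bound hm.aestronglyMeasurable 1 (ae_of_all _ fun ω => abs_le_one_of_mem_Icc (h01 ω))

lemma abs_integral_le_of_abs_le {Z : Ω → ℝ} {c : ℝ} (hZ : ∀ ω, |Z ω| ≤ c) : |P[Z]| ≤ c := by
  simpa using norm_integral_le_of_norm_le_const (μ := P)
    (ae_of_all _ fun ω => (Real.norm_eq_abs _).trans_le (hZ ω))

lemma abs_covariance_le_of_abs_le {X Y : Ω → ℝ} {a b : ℝ} (hX : ∀ ω, |X ω| ≤ a)
    (hY : ∀ ω, |Y ω| ≤ b) : |cov[X, Y; P]| ≤ 4 * a * b := by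
  have hcentered : ∀ {Z : Ω → ℝ} {c : ℝ}, (∀ ω, |Z ω| ≤ c) → ∀ ω, |Z ω - P[Z]| ≤ 2 * c :=
    fun hZ ω => (abs_sub _ _).trans (by linarith [hZ ω, abs_integral_le_of_abs_le (P := P) hZ])
  have hprod : ∀ ω, ‖(X ω - P[X]) * (Y ω - P[Y])‖ ≤ 2 * a * (2 * b) := fun ω => by
    rw [Real.norm_eq_abs, abs_mul]
    exact mul_le_mul (hcentered hX ω) (hcentered hY ω) (abs_nonneg _)
      ((abs_nonneg _).trans (hcentered hX ω))
  have := norm_integral_le_of_norm_le_const (μ := P) (ae_of_all _ hprod)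
  rw [probReal_univ, mul_one, Real.norm_eq_abs] at this
  exact this.trans_eq (by ring)

lemma covariance_indicator_one {A B : Set Ω} (hA : MeasurableSet A) (hB : MeasurableSet B) :
    cov[A.indicator 1, B.indicator 1; P] = P.real (A ∩ B) - P.real A * P.real B := by
  have hmemLp : ∀ {S : Set Ω}, MeasurableSet S → MemLp (S.indicator (1 : Ω → ℝ)) 2 P :=
    fun hS => memLp_indicator_const 2 hS 1 (Or.inr (measure_ne_top _ _))
  rw [covariance_eq_sub (hmemLp hA) (hmemLp hB), ← Set.inter_indicator_one,
    integral_indicator_one (hA.inter hB), integral_indicator_one hA, integral_indicator_one hB]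

end Covariance

section Mixing

variable {Ω : Type*} {𝒜 ℬ : MeasurableSpace Ω} [m0 : MeasurableSpace Ω] {P : Measure Ω}
  [IsProbabilityMeasure P] {α : ℝ} {f g : Ω → ℝ}

lemma abs_covariance_stair_comp_le (hmix : MixingCoeffLE P 𝒜 ℬ α) (h𝒜 : 𝒜 ≤ m0)
    (hℬ : ℬ ≤ m0) (hf : Measurable[𝒜] f) (hg : Measurable[ℬ] g) {n : ℕ} (hn : 0 < n) :
    |cov[fun ω => stair n (f ω), fun ω => stair n (g ω); P]| ≤ α := by
  have hA : ∀ c : ℝ, MeasurableSet[𝒜] (f ⁻¹' Set.Ici c) := fun c => hf measurableSet_Ici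
  have hB : ∀ c : ℝ, MeasurableSet[ℬ] (g ⁻¹' Set.Ici c) := fun c => hg measurableSet_Ici
  have hmemLp : ∀ {S : Set Ω}, MeasurableSet S →
      MemLp (fun ω => (n : ℝ)⁻¹ * S.indicator (1 : Ω → ℝ) ω) 2 P :=
    fun hS => (memLp_indicator_const 2 hS (1 : ℝ) (Or.inr (measure_ne_top _ _))).const_mul _
  simp only [stair, ← Set.indicator_comp_right, Pi.one_comp]
  rw [covariance_fun_sum_fun_sum' (fun j _ => hmemLp (h𝒜 _ (hA _)))
    (fun j _ => hmemLp (hℬ _ (hB _)))]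
  simp only [covariance_const_mul_left, covariance_const_mul_right,
    covariance_indicator_one (h𝒜 _ (hA _)) (hℬ _ (hB _))]
  have hn' : (n : ℝ) ≠ 0 := by exact_mod_cast hn.ne'
  calc _ ≤ ∑ j ∈ Finset.Icc 1 n, ∑ j' ∈ Finset.Icc 1 n, (n : ℝ)⁻¹ * ((n : ℝ)⁻¹ * α) := by
        refine (Finset.abs_sum_le_sum_abs _ _).trans (Finset.sum_le_sum fun j _ => ?_)
        refine (Finset.abs_sum_le_sum_abs _ _).trans (Finset.sum_le_sum fun j' _ => ?_)
        rw [abs_mul, abs_mul, abs_inv, Nat.abs_cast]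
        gcongr
        exact hmix _ _ (hA _) (hB _)
    _ = α := by
        simp only [Finset.sum_const, Nat.card_Icc, Nat.add_sub_cancel, nsmul_eq_mul]
        field_simp

lemma abs_covariance_le_of_mixing (hmix : MixingCoeffLE P 𝒜 ℬ α) (h𝒜 : 𝒜 ≤ m0)
    (hℬ : ℬ ≤ m0) (hf : Measurable[𝒜] f) (hg : Measurable[ℬ] g)
    (hf01 : ∀ ω, f ω ∈ Set.Icc 0 1) (hg01 : ∀ ω, g ω ∈ Set.Icc 0 1) :
    |cov[f, g; P]| ≤ α := by
  have hf' : Measurable f := hf.mono h𝒜 le_rfl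
  have hg' : Measurable g := hg.mono hℬ le_rfl
  have happrox : ∀ n : ℕ, |cov[f, g; P]| ≤ α + 8 / (n + 1) := by
    intro n
    have hn : 0 < n + 1 := n.succ_pos
    have hF01 : ∀ ω, stair (n + 1) (f ω) ∈ Set.Icc 0 1 := fun ω => stair_mem_Icc hn (hf01 ω)
    have hG01 : ∀ ω, stair (n + 1) (g ω) ∈ Set.Icc 0 1 := fun ω => stair_mem_Icc hn (hg01 ω)
    have hF : MemLp (fun ω => stair (n + 1) (f ω)) 2 P :=
      memLp_of_mem_Icc ((measurable_stair _).comp hf') hF01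
    have hG : MemLp (fun ω => stair (n + 1) (g ω)) 2 P :=
      memLp_of_mem_Icc ((measurable_stair _).comp hg') hG01
    have hsplit : cov[f, g; P] = cov[fun ω => f ω - stair (n + 1) (f ω), g; P]
        + cov[fun ω => stair (n + 1) (f ω), fun ω => g ω - stair (n + 1) (g ω); P]
        + cov[fun ω => stair (n + 1) (f ω), fun ω => stair (n + 1) (g ω); P] := by
      rw [covariance_fun_sub_left (memLp_of_mem_Icc hf' hf01) hF (memLp_of_mem_Icc hg' hg01),
        covariance_fun_sub_right hF (memLp_of_mem_Icc hg' hg01) hG]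
      ring
    have h1 := abs_covariance_le_of_abs_le (P := P) (fun ω => abs_sub_stair_le hn (hf01 ω))
      (fun ω => abs_le_one_of_mem_Icc (hg01 ω))
    have h2 := abs_covariance_le_of_abs_le (P := P) (fun ω => abs_le_one_of_mem_Icc (hF01 ω))
      (fun ω => abs_sub_stair_le hn (hg01 ω))
    have h3 := abs_covariance_stair_comp_le hmix h𝒜 hℬ hf hg hn
    push_cast at h1 h2
    have h8 : (8 : ℝ) / (n + 1) = 4 * (1 / (n + 1)) * 1 + 4 * 1 * (1 / (n + 1)) := by ring
    rw [hsplit]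
    refine (abs_add_three _ _ _).trans ?_
    linarith
  refine ge_of_tendsto' (x := (atTop : Filter ℕ)) ?_ happrox
  simpa [div_eq_mul_inv] using
    tendsto_const_nhds.add ((tendsto_one_div_add_atTop_nhds_zero_nat (𝕜 := ℝ)).const_mul 8)

lemma abs_integral_mul_sub_le_of_mixing (hmix : MixingCoeffLE P 𝒜 ℬ α) (h𝒜 : 𝒜 ≤ m0)
    (hℬ : ℬ ≤ m0) (hf : Measurable[𝒜] f) (hg : Measurable[ℬ] g)
    (hf01 : ∀ ω, f ω ∈ Set.Icc 0 1) (hg01 : ∀ ω, g ω ∈ Set.Icc 0 1) :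
    |∫ ω, f ω * g ω ∂P - (∫ ω, f ω ∂P) * ∫ ω, g ω ∂P| ≤ α := by
  have hcov := covariance_eq_sub (memLp_of_mem_Icc (P := P) (hf.mono h𝒜 le_rfl) hf01)
    (memLp_of_mem_Icc (hg.mono hℬ le_rfl) hg01)
  simp only [Pi.mul_apply] at hcov
  rw [← hcov]
  exact abs_covariance_le_of_mixing hmix h𝒜 hℬ hf hg hf01 hg01

end Mixing

lemma abs_sub_pow_le_of_abs_sub_mul_le {a : ℕ → ℝ} {m α : ℝ} {k : ℕ} (hm0 : 0 ≤ m)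
    (hm1 : m ≤ 1) (hα : 0 ≤ α) (ha1 : a 1 = m)
    (hstep : ∀ j, 1 ≤ j → j < k → |a (j + 1) - a j * m| ≤ α) (hk : 1 ≤ k) :
    |a k - m ^ k| ≤ (k - 1) * α := by
  induction k, hk using Nat.le_induction with
  | base => simp [ha1]
  | succ j hj ih =>
    have hprev := ih fun i hi hij => hstep i hi (by omega)
    have hj' : (1 : ℝ) ≤ j := by exact_mod_cast hj
    calc |a (j + 1) - m ^ (j + 1)| = |(a (j + 1) - a j * m) + (a j - m ^ j) * m| := by ring_nf
      _ ≤ |a (j + 1) - a j * m| + |a j - m ^ j| * m := by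
          rw [← abs_of_nonneg hm0, ← abs_mul, abs_of_nonneg hm0]; exact abs_add_le _ _
      _ ≤ α + (j - 1) * α * 1 := by
          gcongr
          exact hstep j hj (by omega)
      _ = ((j + 1 : ℕ) - 1) * α := by push_cast; ring


theorem stmt5_general {Ω : Type*} [m0 : MeasurableSpace Ω]
    (P : Measure Ω) [IsProbabilityMeasure P]
    (α : ℝ) (hα : 0 ≤ α)
    -- the random variables U₁, ..., U_k and the σ-algebras 𝒜ᵢ, ℬᵢ
    (k : ℕ) (hk : 1 ≤ k)
    (U : ℕ → Ω → ℝ) (hUmeas : ∀ i, Measurable[m0] (U i))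
    (hUpos : ∀ i ω, 0 ≤ U i ω)
    (𝒜' ℬ' : ℕ → MeasurableSpace Ω)
    (h𝒜' : ∀ i, 𝒜' i ≤ m0) (hℬ' : ∀ i, ℬ' i ≤ m0)
    (hUB : ∀ i, 2 ≤ i → i ≤ k → Measurable[ℬ' i] (U i))
    (hUA : ∀ i, 2 ≤ i → i ≤ k →
      Measurable[𝒜' i] (fun ω => ∑ l ∈ Finset.Icc 1 (i - 1), U l ω))
    (hmix' : ∀ i, 2 ≤ i → i ≤ k → ∀ A B : Set Ω,
      MeasurableSet[𝒜' i] A → MeasurableSet[ℬ' i] B →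
      |(P (A ∩ B)).toReal - (P A).toReal * (P B).toReal| ≤ α)
    (hid : ∀ i, 2 ≤ i → i ≤ k → @Measure.map Ω ℝ m0 _ (U i) P = @Measure.map Ω ℝ m0 _ (U 1) P) :
    |(∫ ω, Real.exp (-∑ i ∈ Finset.Icc 1 k, U i ω) ∂P)
        - (∫ ω, Real.exp (-U 1 ω) ∂P) ^ k| ≤ 4 * (k - 1 : ℝ) * α := by
  have hexp : ∀ {x : ℝ}, 0 ≤ x → Real.exp (-x) ∈ Set.Icc 0 1 :=
    fun hx => ⟨(Real.exp_pos _).le, Real.exp_le_one_iff.2 (neg_nonpos.2 hx)⟩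
  set m := ∫ ω, Real.exp (-U 1 ω) ∂P
  have hm : m ∈ Set.Icc 0 1 :=
    ⟨integral_nonneg fun ω => (hexp (hUpos 1 ω)).1,
      (le_abs_self m).trans
        (abs_integral_le_of_abs_le fun ω => abs_le_one_of_mem_Icc (hexp (hUpos 1 ω)))⟩
  have hstep : ∀ j, 1 ≤ j → j < k →
      |∫ ω, Real.exp (-∑ i ∈ Finset.Icc 1 (j + 1), U i ω) ∂P
        - (∫ ω, Real.exp (-∑ i ∈ Finset.Icc 1 j, U i ω) ∂P) * m| ≤ α := by
    intro j hj hjk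
    have hlaw : ∫ ω, Real.exp (-U (j + 1) ω) ∂P = m :=
      (IdentDistrib.comp ⟨(hUmeas _).aemeasurable, (hUmeas 1).aemeasurable, hid _ (by omega) hjk⟩
        (Real.measurable_exp.comp measurable_neg)).integral_eq
    have hpast := hUA (j + 1) (by omega) hjk
    rw [Nat.add_sub_cancel] at hpast
    simp only [Finset.sum_Icc_succ_top (by omega : 1 ≤ j + 1), neg_add, Real.exp_add, ← hlaw]
    exact abs_integral_mul_sub_le_of_mixing (hmix' _ (by omega) hjk) (h𝒜' _) (hℬ' _)
      (Real.measurable_exp.comp hpast.neg) (Real.measurable_exp.comp (hUB _ (by omega) hjk).neg)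
      (fun ω => hexp (Finset.sum_nonneg fun i _ => hUpos i ω)) (fun ω => hexp (hUpos _ ω))
  have hk' : (1 : ℝ) ≤ k := by exact_mod_cast hk
  refine (abs_sub_pow_le_of_abs_sub_mul_le
    (a := fun j => ∫ ω, Real.exp (-∑ i ∈ Finset.Icc 1 j, U i ω) ∂P)
    hm.1 hm.2 hα (by simp [m]) hstep hk).trans ?_
  nlinarith

theorem stmt5 {Ω : Type*} [m0 : MeasurableSpace Ω]
    (P : Measure Ω) [IsProbabilityMeasure P]
    (α : ℝ) (hα : 0 ≤ α)
    -- a pair of bounded random variables measurable w.r.t. sub-σ-algebras 𝒜, ℬ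
    -- whose mixing coefficient is at most α, as in the covariance inequality
    (𝒜 ℬ : MeasurableSpace Ω) (h𝒜 : 𝒜 ≤ m0) (hℬ : ℬ ≤ m0)
    (X Y : Ω → ℝ) (hX : Measurable[𝒜] X) (hY : Measurable[ℬ] Y)
    (hXb : ∃ C, ∀ ω, |X ω| ≤ C) (hYb : ∃ C, ∀ ω, |Y ω| ≤ C)
    (hmix : ∀ A B : Set Ω, MeasurableSet[𝒜] A → MeasurableSet[ℬ] B →
      |(P (A ∩ B)).toReal - (P A).toReal * (P B).toReal| ≤ α)
    -- the random variables U₁, ..., U_k and the σ-algebras 𝒜ᵢ, ℬᵢ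
    (k : ℕ) (hk : 1 ≤ k)
    (U : ℕ → Ω → ℝ) (hUmeas : ∀ i, Measurable[m0] (U i))
    (hUpos : ∀ i ω, 0 ≤ U i ω)
    (𝒜' ℬ' : ℕ → MeasurableSpace Ω)
    (h𝒜' : ∀ i, 𝒜' i ≤ m0) (hℬ' : ∀ i, ℬ' i ≤ m0)
    (hUB : ∀ i, 2 ≤ i → i ≤ k → Measurable[ℬ' i] (U i))
    (hUA : ∀ i, 2 ≤ i → i ≤ k →
      Measurable[𝒜' i] (fun ω => ∑ l ∈ Finset.Icc 1 (i - 1), U l ω))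
    (hmix' : ∀ i, 2 ≤ i → i ≤ k → ∀ A B : Set Ω,
      MeasurableSet[𝒜' i] A → MeasurableSet[ℬ' i] B →
      |(P (A ∩ B)).toReal - (P A).toReal * (P B).toReal| ≤ α)
    (hid : ∀ i, 2 ≤ i → i ≤ k → @Measure.map Ω ℝ m0 _ (U i) P = @Measure.map Ω ℝ m0 _ (U 1) P) :
    |(∫ ω, Real.exp (-∑ i ∈ Finset.Icc 1 k, U i ω) ∂P)
        - (∫ ω, Real.exp (-U 1 ω) ∂P) ^ k| ≤ 4 * (k - 1 : ℝ) * α :=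
  stmt5_general (m0 := m0) P α hα k hk U hUmeas hUpos 𝒜' ℬ' h𝒜' hℬ' hUB hUA hmix' hid
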